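/- Suppose functions $Y^1, Y^2, Y^3$ on the unit round sphere $S^2$ solve the linearized isometric embedding system $\sum_{i=1}^3 (\tilde{\nabla}_a \tilde{X}^i \, \tilde{\nabla}_b Y^i + \tilde{\nabla}_b \tilde{X}^i \, \tilde{\nabla}_a Y^i) = \sigma^{(1)}_{ab}$ for a given symmetric 2-tensor $\sigma^{(1)}_{ab}$. Define $h_0^{(-2)} := -\sum_i \tilde{X}^i \tilde{\Delta} Y^i - \tilde{\sigma}^{ab}\sigma^{(1)}_{ab}$. Then $\int_{S^2} h_0^{(-2)} \, dS^2 = -\tfrac{1}{2}\int_{S^2} \tilde{\sigma}^{ab}\sigma^{(1)}_{ab} \, dS^2$. -/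
import Mathlib


/-- Abstract model of the unit round sphere `S²` with round metric `σ̃` (`gmet`),
its inverse (`ginv`), area form `ε` (`eps`), covariant derivative `∇̃` (`grad` on
functions, `covd` on one-forms), integral `∫_{S²} · dS²`, and the three standard
Cartesian coordinate functions `X̃^i` (`X`). -/
structure Sphere2 where
  Pt : Type
  integral : (Pt → ℝ) → ℝ
  ginv : Pt → Fin 2 → Fin 2 → ℝ
  gmet : Pt → Fin 2 → Fin 2 → ℝ
  eps : Pt → Fin 2 → Fin 2 → ℝ
  grad : (Pt → ℝ) → Pt → Fin 2 → ℝ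
  covd : (Pt → Fin 2 → ℝ) → Pt → Fin 2 → Fin 2 → ℝ
  X : Fin 3 → Pt → ℝ

namespace Sphere2

variable (S : Sphere2)

/-- Divergence `∇̃^a ω_a` of a one-form. -/
def div (ω : S.Pt → Fin 2 → ℝ) (p : S.Pt) : ℝ :=
  ∑ a, ∑ b, S.ginv p a b * S.covd ω p a b

/-- Laplace operator `Δ̃`. -/
def lap (f : S.Pt → ℝ) : S.Pt → ℝ := S.div (S.grad f)

/-- Hessian `∇̃_a ∇̃_b f`. -/
def hess (f : S.Pt → ℝ) : S.Pt → Fin 2 → Fin 2 → ℝ := S.covd (S.grad f)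

/-- Area form with raised indices `ε^{ab}`. -/
def epsup (p : S.Pt) (a b : Fin 2) : ℝ :=
  ∑ c, ∑ d, S.ginv p a c * S.ginv p b d * S.eps p c d

end Sphere2

/-- if `Y^i` solve the linearized isometric embedding system
`∑_i (∇̃_a X̃^i ∇̃_b Y^i + ∇̃_b X̃^i ∇̃_a Y^i) = σ⁽¹⁾_{ab}`, and
`h₀⁽⁻²⁾ = -∑_i X̃^i Δ̃ Y^i - σ̃^{ab}σ⁽¹⁾_{ab}`, then
`∫ h₀⁽⁻²⁾ = -(1/2) ∫ σ̃^{ab}σ⁽¹⁾_{ab}`. -/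
theorem mean_curvature_correction_integral (S : Sphere2)
    (σ1 : S.Pt → Fin 2 → Fin 2 → ℝ)
    (Y : Fin 3 → S.Pt → ℝ)
    (hsys : ∀ (p : S.Pt) (a b : Fin 2),
      (∑ i, (S.grad (S.X i) p a * S.grad (Y i) p b
        + S.grad (S.X i) p b * S.grad (Y i) p a)) = σ1 p a b)
    (hIBP : ∀ f g : S.Pt → ℝ,
      S.integral (fun p => f p * S.lap g p)
        = - S.integral (fun p => ∑ a, ∑ b, S.ginv p a b * S.grad f p a * S.grad g p b))
    (hIntAdd : ∀ f g : S.Pt → ℝ,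
      S.integral (fun p => f p + g p) = S.integral f + S.integral g)
    (hIntSmul : ∀ (c : ℝ) (f : S.Pt → ℝ),
      S.integral (fun p => c * f p) = c * S.integral f)
    (hginvSym : ∀ (p : S.Pt) (a b : Fin 2), S.ginv p a b = S.ginv p b a) :
    S.integral (fun p => -(∑ i, S.X i p * S.lap (Y i) p)
        - ∑ a, ∑ b, S.ginv p a b * σ1 p a b)
      = -(1/2) * S.integral (fun p => ∑ a, ∑ b, S.ginv p a b * σ1 p a b) := by

  -- Q i p : the Dirichlet-type integrand for the i-th coordinate
  set Q : Fin 3 → Sphere2.Pt S → ℝ := fun i p =>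
    ∑ a, ∑ b, S.ginv p a b * S.grad (S.X i) p a * S.grad (Y i) p b with hQdef
  have hsum3 : ∀ f : Fin 3 → S.Pt → ℝ,
      S.integral (fun p => ∑ i, f i p) = ∑ i, S.integral (f i) := by
    intro f
    have h1 : (fun p => ∑ i, f i p) = fun p => f 0 p + (f 1 p + f 2 p) := by
      funext p; simp [Fin.sum_univ_three, add_assoc]
    rw [h1, hIntAdd, hIntAdd, Fin.sum_univ_three, add_assoc]
  have hTpt : ∀ p : S.Pt, (∑ a, ∑ b, S.ginv p a b * σ1 p a b) = 2 * ∑ i, Q i p := by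
    intro p
    have h00 := hsys p 0 0
    have h01 := hsys p 0 1
    have h10 := hsys p 1 0
    have h11 := hsys p 1 1
    simp only [Fin.sum_univ_three] at h00 h01 h10 h11
    have hg : S.ginv p 1 0 = S.ginv p 0 1 := hginvSym p 1 0
    simp only [hQdef, Fin.sum_univ_two, Fin.sum_univ_three, hg]
    linear_combination (-(S.ginv p 0 0)) * h00 + (-(S.ginv p 0 1)) * h01
      + (-(S.ginv p 0 1)) * h10 + (-(S.ginv p 1 1)) * h11
  have hTint : S.integral (fun p => ∑ a, ∑ b, S.ginv p a b * σ1 p a b)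
      = 2 * S.integral (fun p => ∑ i, Q i p) := by
    have h1 : (fun p => ∑ a, ∑ b, S.ginv p a b * σ1 p a b)
        = fun p => 2 * ∑ i, Q i p := funext hTpt
    rw [h1, hIntSmul]
  have hI1 : S.integral (fun p => ∑ i, S.X i p * S.lap (Y i) p)
      = - S.integral (fun p => ∑ i, Q i p) := by
    rw [hsum3 (fun i p => S.X i p * S.lap (Y i) p), hsum3 Q]
    have h2 : ∀ i, S.integral (fun p => S.X i p * S.lap (Y i) p) = - S.integral (Q i) := by
      intro i
      simpa [hQdef] using hIBP (S.X i) (Y i)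
    simp [h2, Finset.sum_neg_distrib]
  have key : (fun p => -(∑ i, S.X i p * S.lap (Y i) p)
        - ∑ a, ∑ b, S.ginv p a b * σ1 p a b)
      = fun p => (-1 : ℝ) * (∑ i, S.X i p * S.lap (Y i) p)
        + (-1 : ℝ) * (∑ a, ∑ b, S.ginv p a b * σ1 p a b) := by
    funext p; ring
  rw [key, hIntAdd, hIntSmul, hIntSmul, hTint, hI1]
  ring
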